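/- Let Θ > 0 and c ∈ ℝ with c ≠ 0, and define F(c,b,Θ) := (1 + erf((Θb² + c)/(b√2)))/(1 + erf((Θb² − c)/(b√2))) for b > 0. Then lim_{b→0⁺} [1 − 2/(1 + e^{2Θc} F(c,b,Θ))] = sign(c). Consequently, as Δq̄ → 0⁺ the zero-temperature 1-RSB magnetization equation collapses onto the zero-temperature replica-symmetric one: for m̄ ∈ ℝ, γ > 0, integer P ≥ 2, with A₁ := (P/2)m̄^{P−1}, A₂ := √(γP/2) and J⁽¹⁾ ~ N(0,1), E₁[1 − 2/(1 + e^{2Θ(A₁+A₂J⁽¹⁾)} F(A₁+A₂J⁽¹⁾, b, Θ))] → E₁[sign(A₁ + A₂J⁽¹⁾)] = erf(A₁/(A₂√2)) as b → 0⁺. -/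

import Mathlib

open MeasureTheory ProbabilityTheory Real Filter

/-- Expectation of `f J` for a standard Gaussian `J ~ N(0,1)`. -/
noncomputable def gExp (f : ℝ → ℝ) : ℝ := ∫ y, f y ∂(gaussianReal 0 1)

/-- Sign function: 1 for positive, -1 for negative arguments. -/
noncomputable def sgn (u : ℝ) : ℝ := if 0 < u then 1 else if u < 0 then -1 else 0

/-- The error function. -/
noncomputable def erf (u : ℝ) : ℝ := (2 / Real.sqrt π) * ∫ t in (0:ℝ)..u, Real.exp (-t^2)

/-- The function F(c,b,Θ) appearing in the zero-temperature 1-RSB equations. -/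
noncomputable def Ffun (c b Θ : ℝ) : ℝ :=
  (1 + erf ((Θ * b^2 + c) / (b * Real.sqrt 2))) / (1 + erf ((Θ * b^2 - c) / (b * Real.sqrt 2)))

open Set

section Helpers

lemma gcont : Continuous fun t : ℝ => Real.exp (-t^2) := by continuity

lemma gint : Integrable (fun t : ℝ => Real.exp (-t^2)) := by
  have := integrable_exp_neg_mul_sq (by norm_num : (0:ℝ) < 1)
  simpa using this

lemma gIoi : ∫ t in Ioi (0:ℝ), Real.exp (-t^2) = Real.sqrt π / 2 := by
  have := integral_gaussian_Ioi 1
  simpa using this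

lemma gIic : ∫ t in Iic (0:ℝ), Real.exp (-t^2) = Real.sqrt π / 2 := by
  have h := integral_comp_neg_Ioi (0:ℝ) (fun t => Real.exp (-t^2))
  simp only [neg_sq, neg_zero] at h
  rw [← h, gIoi]

lemma erf_continuous : Continuous erf := by
  unfold erf
  exact continuous_const.mul
    (intervalIntegral.continuous_primitive (fun a b => gcont.intervalIntegrable a b) 0)

lemma one_add_erf_pos (u : ℝ) : 0 < 1 + erf u := by
  have hpi : 0 < Real.sqrt π := Real.sqrt_pos.mpr Real.pi_pos
  have key : -(Real.sqrt π / 2) < ∫ t in (0:ℝ)..u, Real.exp (-t^2) := by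
    rcases le_or_gt 0 u with h | h
    · have : 0 ≤ ∫ t in (0:ℝ)..u, Real.exp (-t^2) :=
        intervalIntegral.integral_nonneg h (fun x _ => (Real.exp_pos _).le)
      nlinarith
    · have hIic : (∫ t in Iic u, Real.exp (-t^2)) + ∫ t in u..(0:ℝ), Real.exp (-t^2)
          = Real.sqrt π / 2 := by
        rw [← intervalIntegral.integral_Iic_sub_Iic gint.integrableOn gint.integrableOn, gIic]
        ring
      have hpos : 0 < ∫ t in Iic u, Real.exp (-t^2) := by
        rw [setIntegral_pos_iff_support_of_nonneg_ae]
        · have : Function.support (fun t : ℝ => Real.exp (-t^2)) = Set.univ := by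
            ext t; simp [Function.support, (Real.exp_pos _).ne']
          rw [this, Set.univ_inter]
          simp [Real.volume_Iic]
        · exact Eventually.of_forall fun x => (Real.exp_pos _).le
        · exact gint.integrableOn
      have hswap : ∫ t in (0:ℝ)..u, Real.exp (-t^2) = -∫ t in u..(0:ℝ), Real.exp (-t^2) := by
        rw [intervalIntegral.integral_symm]
      linarith
  unfold erf
  have h2 : 1 + 2 / Real.sqrt π * ∫ t in (0:ℝ)..u, Real.exp (-t^2)
      > 1 + 2 / Real.sqrt π * (-(Real.sqrt π / 2)) := by
    have : 0 < 2 / Real.sqrt π := by positivity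
    nlinarith
  have h3 : 1 + 2 / Real.sqrt π * (-(Real.sqrt π / 2)) = 0 := by
    field_simp
    try ring
  linarith

lemma tendsto_erf_atTop : Tendsto erf atTop (nhds 1) := by
  have h := intervalIntegral_tendsto_integral_Ioi 0 gint.integrableOn tendsto_id
  rw [gIoi] at h
  have := h.const_mul (2 / Real.sqrt π)
  have heq : 2 / Real.sqrt π * (Real.sqrt π / 2) = 1 := by
    have hpi : 0 < Real.sqrt π := Real.sqrt_pos.mpr Real.pi_pos
    field_simp
  rw [heq] at this
  exact this

lemma erf_neg (u : ℝ) : erf (-u) = -erf u := by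
  unfold erf
  have h : ∫ t in (0:ℝ)..(-u), Real.exp (-t^2) = -∫ t in (0:ℝ)..u, Real.exp (-t^2) := by
    rw [intervalIntegral.integral_symm]
    congr 1
    have := intervalIntegral.integral_comp_neg (a := -u) (b := 0) (fun t => Real.exp (-t^2))
    simp only [neg_sq, neg_zero, neg_neg] at this
    exact this
  rw [h]; ring

lemma tendsto_erf_atBot : Tendsto erf atBot (nhds (-1)) := by
  have h : Tendsto (fun u => erf (-u)) atBot (nhds 1) :=
    tendsto_erf_atTop.comp tendsto_neg_atBot_atTop
  have h2 : Tendsto (fun u => -erf (-u)) atBot (nhds (-1)) := h.neg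
  simpa [erf_neg] using h2

lemma Ffun_pos (c b Θ : ℝ) : 0 < Ffun c b Θ :=
  div_pos (one_add_erf_pos _) (one_add_erf_pos _)

lemma key_limit (Θ c : ℝ) (hc : c ≠ 0) :
    Tendsto (fun b : ℝ => 1 - 2 / (1 + Real.exp (2 * Θ * c) * Ffun c b Θ))
      (nhdsWithin 0 (Set.Ioi 0)) (nhds (sgn c)) := by
  have hs2 : (0:ℝ) < Real.sqrt 2 := by positivity
  have hinv : Tendsto (fun b : ℝ => b⁻¹) (nhdsWithin 0 (Set.Ioi 0)) atTop :=
    tendsto_inv_nhdsGT_zero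
  have hb0 : Tendsto (fun b : ℝ => Θ / Real.sqrt 2 * b) (nhdsWithin 0 (Set.Ioi 0)) (nhds 0) := by
    have := (tendsto_id.const_mul (Θ / Real.sqrt 2)).mono_left
      (nhdsWithin_le_nhds : nhdsWithin (0:ℝ) (Set.Ioi 0) ≤ nhds 0)
    simpa using this
  have hargeq : ∀ d : ℝ, ∀ᶠ b in nhdsWithin (0:ℝ) (Set.Ioi 0),
      (Θ * b^2 + d) / (b * Real.sqrt 2) = Θ / Real.sqrt 2 * b + d / Real.sqrt 2 * b⁻¹ := by
    intro d
    filter_upwards [self_mem_nhdsWithin] with b hb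
    have hbne : b ≠ 0 := ne_of_gt hb
    field_simp
  have hargTop : ∀ d : ℝ, 0 < d → Tendsto (fun b : ℝ => (Θ * b^2 + d) / (b * Real.sqrt 2))
      (nhdsWithin 0 (Set.Ioi 0)) atTop := by
    intro d hd
    refine Tendsto.congr' (EventuallyEq.symm (hargeq d)) ?_
    exact hb0.add_atTop (hinv.const_mul_atTop (by positivity))
  have hargBot : ∀ d : ℝ, d < 0 → Tendsto (fun b : ℝ => (Θ * b^2 + d) / (b * Real.sqrt 2))
      (nhdsWithin 0 (Set.Ioi 0)) atBot := by
    intro d hd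
    refine Tendsto.congr' (EventuallyEq.symm (hargeq d)) ?_
    have : Tendsto (fun b : ℝ => d / Real.sqrt 2 * b⁻¹) (nhdsWithin 0 (Set.Ioi 0)) atBot := by
      have hneg : d / Real.sqrt 2 < 0 := div_neg_of_neg_of_pos hd hs2
      exact Tendsto.const_mul_atTop_of_neg hneg hinv
    exact hb0.add_atBot this
  rcases hc.lt_or_gt with hneg | hpos
  · have hsgn : sgn c = -1 := by simp [sgn, hneg, not_lt.mpr hneg.le]
    rw [hsgn]
    have hnum : Tendsto (fun b : ℝ => 1 + erf ((Θ * b^2 + c) / (b * Real.sqrt 2)))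
        (nhdsWithin 0 (Set.Ioi 0)) (nhds 0) := by
      have := (tendsto_const_nhds (x := (1:ℝ))).add (tendsto_erf_atBot.comp (hargBot c hneg))
      simpa using this
    have hden : Tendsto (fun b : ℝ => 1 + erf ((Θ * b^2 - c) / (b * Real.sqrt 2)))
        (nhdsWithin 0 (Set.Ioi 0)) (nhds 2) := by
      have h1 : Tendsto (fun b : ℝ => (Θ * b^2 + -c) / (b * Real.sqrt 2))
          (nhdsWithin 0 (Set.Ioi 0)) atTop := hargTop (-c) (by linarith)
      have := (tendsto_const_nhds (x := (1:ℝ))).add (tendsto_erf_atTop.comp h1)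
      simp only [sub_eq_add_neg]
      convert this using 2
      all_goals norm_num
    have hF : Tendsto (fun b : ℝ => Ffun c b Θ) (nhdsWithin 0 (Set.Ioi 0)) (nhds 0) := by
      have := hnum.div hden (by norm_num)
      rw [zero_div] at this
      exact this
    have hD : Tendsto (fun b : ℝ => 1 + Real.exp (2 * Θ * c) * Ffun c b Θ)
        (nhdsWithin 0 (Set.Ioi 0)) (nhds 1) := by
      have := (tendsto_const_nhds (x := (1:ℝ))).add
        ((tendsto_const_nhds (x := Real.exp (2 * Θ * c))).mul hF)
      simpa using this
    have := (tendsto_const_nhds (x := (1:ℝ))).sub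
      ((tendsto_const_nhds (x := (2:ℝ))).div hD one_ne_zero)
    norm_num at this; simpa using this
  · have hsgn : sgn c = 1 := by simp [sgn, hpos]
    rw [hsgn]
    have hnum : Tendsto (fun b : ℝ => 1 + erf ((Θ * b^2 + c) / (b * Real.sqrt 2)))
        (nhdsWithin 0 (Set.Ioi 0)) (nhds 2) := by
      have := (tendsto_const_nhds (x := (1:ℝ))).add (tendsto_erf_atTop.comp (hargTop c hpos))
      convert this using 2
      all_goals norm_num
    have hden0 : Tendsto (fun b : ℝ => 1 + erf ((Θ * b^2 - c) / (b * Real.sqrt 2)))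
        (nhdsWithin 0 (Set.Ioi 0)) (nhdsWithin 0 (Set.Ioi 0)) := by
      have h1 : Tendsto (fun b : ℝ => (Θ * b^2 + -c) / (b * Real.sqrt 2))
          (nhdsWithin 0 (Set.Ioi 0)) atBot := hargBot (-c) (by linarith)
      have h2 : Tendsto (fun b : ℝ => 1 + erf ((Θ * b^2 - c) / (b * Real.sqrt 2)))
          (nhdsWithin 0 (Set.Ioi 0)) (nhds 0) := by
        have := (tendsto_const_nhds (x := (1:ℝ))).add (tendsto_erf_atBot.comp h1)
        simp only [sub_eq_add_neg]
        convert this using 2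
        all_goals norm_num
      refine tendsto_nhdsWithin_of_tendsto_nhds_of_eventually_within _ h2 ?_
      exact Eventually.of_forall fun b => one_add_erf_pos _
    have hF : Tendsto (fun b : ℝ => Ffun c b Θ) (nhdsWithin 0 (Set.Ioi 0)) atTop := by
      have hinv2 := tendsto_inv_nhdsGT_zero.comp hden0
      have := hnum.pos_mul_atTop (by norm_num) hinv2
      refine this.congr fun b => ?_
      simp [Ffun, div_eq_mul_inv, Function.comp]
    have hD : Tendsto (fun b : ℝ => 1 + Real.exp (2 * Θ * c) * Ffun c b Θ)
        (nhdsWithin 0 (Set.Ioi 0)) atTop := by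
      have := hF.const_mul_atTop (Real.exp_pos (2 * Θ * c))
      exact tendsto_atTop_add_const_left _ 1 this
    have := (tendsto_const_nhds (x := (1:ℝ))).sub
      ((tendsto_const_nhds (x := (2:ℝ))).div_atTop hD)
    simpa using this

lemma pdf_even (x : ℝ) : gaussianPDFReal 0 1 (-x) = gaussianPDFReal 0 1 x := by
  simp [gaussianPDFReal]

lemma pdf_eq (x : ℝ) : gaussianPDFReal 0 1 x = (Real.sqrt (2 * π))⁻¹ * Real.exp (-x^2 / 2) := by
  simp [gaussianPDFReal]

lemma gauss_sgn (A₁ A₂ : ℝ) (hA₂ : 0 < A₂) :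
    ∫ j, sgn (A₁ + A₂ * j) ∂(gaussianReal 0 1) = erf (A₁ / (A₂ * Real.sqrt 2)) := by
  set μ := gaussianReal 0 1 with hμ
  set s : ℝ := A₁ / A₂ with hsdef
  have hs2 : (0:ℝ) < Real.sqrt 2 := by positivity
  have hpi : (0:ℝ) < Real.sqrt π := Real.sqrt_pos.mpr Real.pi_pos
  have hfun : (fun j => sgn (A₁ + A₂ * j)) =
      (fun j => (Set.Ioi (-s)).indicator (fun _ => (1:ℝ)) j
        + (Set.Iio (-s)).indicator (fun _ => (-1:ℝ)) j) := by
    funext j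
    have h1 : (-s < j) ↔ 0 < A₁ + A₂ * j := by
      rw [hsdef, ← neg_div, div_lt_iff₀ hA₂]
      constructor <;> intro h <;> nlinarith
    have h2 : (j < -s) ↔ A₁ + A₂ * j < 0 := by
      rw [hsdef, ← neg_div, lt_div_iff₀ hA₂]
      constructor <;> intro h <;> nlinarith
    rcases lt_trichotomy j (-s) with h | h | h
    · rw [Set.indicator_of_notMem (by simpa using asymm h),
        Set.indicator_of_mem (by simpa using h)]
      have hv : A₁ + A₂ * j < 0 := h2.mp h
      simp only [sgn, if_neg (not_lt.mpr hv.le), if_pos hv]; ring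
    · have hv1 : ¬ (0 < A₁ + A₂ * j) := fun hh => absurd (h1.mpr hh) (by simp [h])
      have hv2 : ¬ (A₁ + A₂ * j < 0) := fun hh => absurd (h2.mpr hh) (by simp [h])
      rw [Set.indicator_of_notMem (by simp [h]), Set.indicator_of_notMem (by simp [h])]
      simp only [sgn, if_neg hv1, if_neg hv2]; ring
    · rw [Set.indicator_of_mem (by simpa using h),
        Set.indicator_of_notMem (by simpa using asymm h)]
      have hv : 0 < A₁ + A₂ * j := h1.mp h
      simp only [sgn, if_pos hv]; ring
  have hint1 : Integrable ((Set.Ioi (-s)).indicator (fun _ => (1:ℝ))) μ :=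
    (integrable_const _).indicator measurableSet_Ioi
  have hint2 : Integrable ((Set.Iio (-s)).indicator (fun _ => (-1:ℝ))) μ :=
    (integrable_const _).indicator measurableSet_Iio
  rw [hfun, integral_add hint1 hint2, integral_indicator_const _ measurableSet_Ioi,
    integral_indicator_const _ measurableSet_Iio]
  have hmeas : ∀ S : Set ℝ, MeasurableSet S → (μ S).toReal = ∫ x in S, gaussianPDFReal 0 1 x := by
    intro S hS
    rw [hμ, gaussianReal_apply_eq_integral 0 one_ne_zero,
      ENNReal.toReal_ofReal (setIntegral_nonneg hS fun x _ => gaussianPDFReal_nonneg 0 1 x)]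
  rw [measureReal_def, measureReal_def, hmeas _ measurableSet_Ioi, hmeas _ measurableSet_Iio]
  have hIoi : ∫ x in Ioi (-s), gaussianPDFReal 0 1 x = ∫ x in Iic s, gaussianPDFReal 0 1 x := by
    have h := integral_comp_neg_Ioi (-s) (gaussianPDFReal 0 1)
    simp only [neg_neg] at h
    rw [← h]
    exact setIntegral_congr_fun measurableSet_Ioi fun x _ => (pdf_even x).symm
  have hIio : ∫ x in Iio (-s), gaussianPDFReal 0 1 x = ∫ x in Iic (-s), gaussianPDFReal 0 1 x :=
    setIntegral_congr_set Iio_ae_eq_Iic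
  rw [hIoi, hIio]
  have hIntOn : ∀ a : ℝ, IntegrableOn (gaussianPDFReal 0 1) (Iic a) := fun a =>
    (integrable_gaussianPDFReal 0 1).integrableOn
  have hII : ∀ a b : ℝ, IntervalIntegrable (gaussianPDFReal 0 1) volume a b := fun a b =>
    (integrable_gaussianPDFReal 0 1).intervalIntegrable
  have hdiff : (∫ x in Iic s, gaussianPDFReal 0 1 x) - ∫ x in Iic (-s), gaussianPDFReal 0 1 x
      = ∫ x in (-s)..s, gaussianPDFReal 0 1 x :=
    intervalIntegral.integral_Iic_sub_Iic (hIntOn _) (hIntOn _)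
  have hsplit : ∫ x in (-s)..s, gaussianPDFReal 0 1 x
      = 2 * ∫ x in (0:ℝ)..s, gaussianPDFReal 0 1 x := by
    rw [← intervalIntegral.integral_add_adjacent_intervals (hII (-s) 0) (hII 0 s)]
    have : ∫ x in (-s)..(0:ℝ), gaussianPDFReal 0 1 x
        = ∫ x in (0:ℝ)..s, gaussianPDFReal 0 1 x := by
      have h := intervalIntegral.integral_comp_neg (a := (0:ℝ)) (b := s) (gaussianPDFReal 0 1)
      simp only [neg_zero] at h
      rw [← h]
      exact intervalIntegral.integral_congr fun x _ => pdf_even x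
    rw [this]; ring
  have hu : s = Real.sqrt 2 * (A₁ / (A₂ * Real.sqrt 2)) := by
    rw [hsdef]; field_simp
  have hsub : ∫ x in (0:ℝ)..s, gaussianPDFReal 0 1 x
      = (Real.sqrt (2 * π))⁻¹
        * (Real.sqrt 2 * ∫ t in (0:ℝ)..(A₁ / (A₂ * Real.sqrt 2)), Real.exp (-t^2)) := by
    have h1 : ∫ x in (0:ℝ)..s, gaussianPDFReal 0 1 x
        = (Real.sqrt (2 * π))⁻¹ * ∫ x in (0:ℝ)..s, Real.exp (-x^2/2) := by
      simp_rw [pdf_eq]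
      rw [intervalIntegral.integral_const_mul]
    have h3 : ∀ x : ℝ, Real.exp (-(Real.sqrt 2 * x)^2/2) = Real.exp (-x^2) := by
      intro x; congr 1
      rw [mul_pow, Real.sq_sqrt (by norm_num : (0:ℝ) ≤ 2)]; ring
    have h2 := intervalIntegral.integral_comp_mul_left (a := (0:ℝ))
      (b := A₁ / (A₂ * Real.sqrt 2)) (fun y => Real.exp (-y^2/2)) (ne_of_gt hs2)
    simp only [h3, mul_zero, smul_eq_mul] at h2
    rw [← hu] at h2
    rw [h1]
    congr 1
    rw [h2, ← mul_assoc, mul_inv_cancel₀ (ne_of_gt hs2), one_mul]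
  rw [smul_eq_mul, smul_eq_mul, mul_one, mul_neg_one, ← sub_eq_add_neg, hdiff, hsplit, hsub]
  unfold erf
  rw [Real.sqrt_mul (by norm_num : (0:ℝ) ≤ 2)]
  have h2ne : Real.sqrt 2 ≠ 0 := ne_of_gt hs2
  have hπne : Real.sqrt π ≠ 0 := ne_of_gt hpi
  field_simp

end Helpers

theorem stmt7 (Θ c : ℝ) (hΘ : 0 < Θ) (hc : c ≠ 0)
    (mb γ : ℝ) (P : ℕ) (hγ : 0 < γ) (hP : 2 ≤ P)
    (A₁ A₂ : ℝ)
    (hA₁ : A₁ = ((P : ℝ)/2) * mb ^ (P - 1))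
    (hA₂ : A₂ = Real.sqrt (γ * (P : ℝ) / 2)) :
    Tendsto (fun b : ℝ => 1 - 2 / (1 + Real.exp (2 * Θ * c) * Ffun c b Θ))
      (nhdsWithin 0 (Set.Ioi 0)) (nhds (sgn c))
    ∧ Tendsto (fun b : ℝ => gExp (fun j1 =>
        1 - 2 / (1 + Real.exp (2 * Θ * (A₁ + A₂ * j1)) * Ffun (A₁ + A₂ * j1) b Θ)))
      (nhdsWithin 0 (Set.Ioi 0)) (nhds (gExp (fun j1 => sgn (A₁ + A₂ * j1))))
    ∧ gExp (fun j1 => sgn (A₁ + A₂ * j1)) = erf (A₁ / (A₂ * Real.sqrt 2)) := by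
  have hA₂pos : 0 < A₂ := by
    rw [hA₂]
    apply Real.sqrt_pos.mpr
    have : (0:ℝ) < (P:ℝ) := by positivity
    positivity
  refine ⟨key_limit Θ c hc, ?_, gauss_sgn A₁ A₂ hA₂pos⟩
  unfold gExp
  apply tendsto_integral_filter_of_dominated_convergence (bound := fun _ => (3:ℝ))
  · -- measurability
    refine Eventually.of_forall fun b => ?_
    have hlin : Continuous fun j : ℝ => A₁ + A₂ * j := by continuity
    have hFc : Continuous fun x : ℝ => Ffun x b Θ := by
      unfold Ffun
      have harg1 : Continuous fun x : ℝ => (Θ * b^2 + x) / (b * Real.sqrt 2) :=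
        (continuous_const.add continuous_id).div_const _
      have harg2 : Continuous fun x : ℝ => (Θ * b^2 - x) / (b * Real.sqrt 2) :=
        (continuous_const.sub continuous_id).div_const _
      exact (continuous_const.add (erf_continuous.comp harg1)).div
        (continuous_const.add (erf_continuous.comp harg2))
        (fun x => (one_add_erf_pos _).ne')
    have hcont : Continuous fun j : ℝ =>
        1 - 2 / (1 + Real.exp (2 * Θ * (A₁ + A₂ * j)) * Ffun (A₁ + A₂ * j) b Θ) := by
      refine continuous_const.sub (continuous_const.div ?_ ?_)
      · exact continuous_const.add
          ((Real.continuous_exp.comp (by continuity)).mul (hFc.comp hlin))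
      · intro j
        have : 0 < 1 + Real.exp (2 * Θ * (A₁ + A₂ * j)) * Ffun (A₁ + A₂ * j) b Θ :=
          add_pos_of_pos_of_nonneg one_pos
            (mul_nonneg (Real.exp_pos _).le (Ffun_pos _ _ _).le)
        exact this.ne'
    exact hcont.aestronglyMeasurable
  · -- bound
    refine Eventually.of_forall fun b => Eventually.of_forall fun j => ?_
    set D := 1 + Real.exp (2 * Θ * (A₁ + A₂ * j)) * Ffun (A₁ + A₂ * j) b Θ with hD
    have hD1 : (1:ℝ) ≤ D :=
      le_add_of_nonneg_right (mul_nonneg (Real.exp_pos _).le (Ffun_pos _ _ _).le)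
    have h0 : 0 ≤ 2 / D := by positivity
    have hle : 2 / D ≤ 2 := by
      rw [div_le_iff₀ (by linarith)]
      nlinarith
    rw [Real.norm_eq_abs, abs_le]
    constructor <;> linarith
  · exact integrable_const _
  · -- a.e. pointwise limit
    have hnull : (gaussianReal 0 1) {j : ℝ | A₁ + A₂ * j = 0} = 0 := by
      have hsub : {j : ℝ | A₁ + A₂ * j = 0} ⊆ {-A₁ / A₂} := by
        intro j hj
        simp only [Set.mem_setOf_eq] at hj
        simp only [Set.mem_singleton_iff]
        field_simp
        linarith
      refine measure_mono_null hsub ?_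
      exact gaussianReal_absolutelyContinuous 0 one_ne_zero (measure_singleton _)
    have hae : ∀ᵐ j ∂(gaussianReal 0 1), A₁ + A₂ * j ≠ 0 := by
      rw [ae_iff]
      simpa using hnull
    filter_upwards [hae] with j hj
    exact key_limit Θ (A₁ + A₂ * j) hj
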